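/- Let q, r ∈ Δⁿ be probability vectors and X¹,…,Xⁿ, Y¹,…,Yⁿ ∈ ℝᵈ vectors with ‖Xⁱ‖₂ ≤ c and ‖Yⁱ‖₂ ≤ c for all i. Suppose S, T ⊆ {1,…,n} satisfy ∑_{j∈S} qⱼ ≥ δ and ∑_{j∈T} rⱼ ≥ δ with δ ∈ (0,1]. Define p_l := ∑ᵢ qᵢ Xⁱ, p_s := ∑ᵢ rᵢ Yⁱ, p'_l := ∑_{j∈S} (qⱼ / ∑_{k∈S} q_k) Xʲ, and p'_s := ∑_{j∈T} (rⱼ / ∑_{k∈T} r_k) Yʲ. Then ‖p_l − p_s‖₂ ≤ ‖p'_l − p'_s‖₂ + 4(1−δ)c. -/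

import Mathlib

open Finset

lemma norm_sum_smul_le_sum_mul {ι E : Type*} [SeminormedAddCommGroup E] [NormedSpace ℝ E]
    (s : Finset ι) {q : ι → ℝ} (hq : ∀ i ∈ s, 0 ≤ q i) {X : ι → E} {c : ℝ}
    (hX : ∀ i ∈ s, ‖X i‖ ≤ c) :
    ‖∑ i ∈ s, q i • X i‖ ≤ (∑ i ∈ s, q i) * c := by
  calc ‖∑ i ∈ s, q i • X i‖ ≤ ∑ i ∈ s, ‖q i • X i‖ := norm_sum_le _ _
    _ ≤ ∑ i ∈ s, q i * c := by
        refine sum_le_sum fun i hi => ?_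
        rw [norm_smul, Real.norm_of_nonneg (hq i hi)]
        exact mul_le_mul_of_nonneg_left (hX i hi) (hq i hi)
    _ = (∑ i ∈ s, q i) * c := (sum_mul ..).symm

/-- With `Q = ∑_{j ∈ S} q j`, the difference is `∑_{j ∉ S} q j • X j - (Q⁻¹ - 1) • ∑_{j ∈ S} q j • X j`,
and each of the two terms has norm at most `(1 - Q) * c`. -/
lemma norm_sum_smul_sub_renormalized_le {ι E : Type*} [Fintype ι] [DecidableEq ι]
    [SeminormedAddCommGroup E] [NormedSpace ℝ E]
    {q : ι → ℝ} (hq : ∀ i, 0 ≤ q i) (hq1 : ∑ i, q i = 1) {X : ι → E} {c : ℝ}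
    (hX : ∀ i, ‖X i‖ ≤ c) (S : Finset ι) (hS : 0 < ∑ k ∈ S, q k) :
    ‖(∑ i, q i • X i) - ∑ j ∈ S, (q j / ∑ k ∈ S, q k) • X j‖ ≤
      2 * (1 - ∑ k ∈ S, q k) * c := by
  set Q := ∑ k ∈ S, q k
  have hQc : ∑ j ∈ Sᶜ, q j = 1 - Q := by
    rw [← hq1, ← sum_compl_add_sum S q]; ring
  have hQ1 : Q ≤ 1 := by linarith [sum_nonneg fun j (_ : j ∈ Sᶜ) => hq j]
  have hsplit : (∑ i, q i • X i) - ∑ j ∈ S, (q j / Q) • X j =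
      ∑ j ∈ Sᶜ, q j • X j - (Q⁻¹ - 1) • ∑ j ∈ S, q j • X j := by
    simp only [div_eq_inv_mul, mul_smul, ← smul_sum, sub_smul, one_smul,
      ← sum_compl_add_sum S (fun i => q i • X i)]
    abel
  have hscale : 0 ≤ Q⁻¹ - 1 := sub_nonneg.mpr (one_le_inv₀ hS |>.mpr hQ1)
  rw [hsplit]
  calc _ ≤ ‖∑ j ∈ Sᶜ, q j • X j‖ + (Q⁻¹ - 1) * ‖∑ j ∈ S, q j • X j‖ := by
        grw [norm_sub_le, norm_smul, Real.norm_of_nonneg hscale]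
    _ ≤ (1 - Q) * c + (Q⁻¹ - 1) * (Q * c) := by
        grw [norm_sum_smul_le_sum_mul Sᶜ (fun i _ => hq i) (fun i _ => hX i),
          norm_sum_smul_le_sum_mul S (fun i _ => hq i) (fun i _ => hX i), hQc]
    _ = 2 * (1 - Q) * c := by field_simp; ring

theorem stmt_3_general (d n : ℕ) (q r : Fin n → ℝ) (hq : ∀ i, 0 ≤ q i)
    (hq1 : ∑ i, q i = 1) (hr : ∀ i, 0 ≤ r i) (hr1 : ∑ i, r i = 1)
    (X Y : Fin n → EuclideanSpace ℝ (Fin d)) (c : ℝ)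
    (hX : ∀ i, ‖X i‖ ≤ c) (hY : ∀ i, ‖Y i‖ ≤ c)
    (S T : Finset (Fin n)) (δ : ℝ) (hδ0 : 0 < δ)
    (hS : δ ≤ ∑ j ∈ S, q j) (hT : δ ≤ ∑ j ∈ T, r j) :
    ‖(∑ i, q i • X i) - ∑ i, r i • Y i‖ ≤
      ‖(∑ j ∈ S, (q j / (∑ k ∈ S, q k)) • X j) -
        ∑ j ∈ T, (r j / (∑ k ∈ T, r k)) • Y j‖ + 4 * (1 - δ) * c := by
  obtain ⟨i, -⟩ := nonempty_of_sum_ne_zero (hq1.trans_ne one_ne_zero)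
  have hc : 0 ≤ c := (norm_nonneg _).trans (hX i)
  have hqS := norm_sum_smul_sub_renormalized_le hq hq1 hX S (hδ0.trans_le hS)
  have hrT := norm_sum_smul_sub_renormalized_le hr hr1 hY T (hδ0.trans_le hT)
  grw [← hS] at hqS
  grw [← hT] at hrT
  rw [norm_sub_rev] at hrT
  have htriangle := dist_triangle4 (∑ i, q i • X i) (∑ j ∈ S, (q j / ∑ k ∈ S, q k) • X j)
    (∑ j ∈ T, (r j / ∑ k ∈ T, r k) • Y j) (∑ i, r i • Y i)
  simp only [dist_eq_norm] at htriangle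
  linarith

theorem stmt_3 (d n : ℕ) (q r : Fin n → ℝ) (hq : ∀ i, 0 ≤ q i)
    (hq1 : ∑ i, q i = 1) (hr : ∀ i, 0 ≤ r i) (hr1 : ∑ i, r i = 1)
    (X Y : Fin n → EuclideanSpace ℝ (Fin d)) (c : ℝ)
    (hX : ∀ i, ‖X i‖ ≤ c) (hY : ∀ i, ‖Y i‖ ≤ c)
    (S T : Finset (Fin n)) (δ : ℝ) (hδ0 : 0 < δ) (hδ1 : δ ≤ 1)
    (hS : δ ≤ ∑ j ∈ S, q j) (hT : δ ≤ ∑ j ∈ T, r j) :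
    ‖(∑ i, q i • X i) - ∑ i, r i • Y i‖ ≤
      ‖(∑ j ∈ S, (q j / (∑ k ∈ S, q k)) • X j) -
        ∑ j ∈ T, (r j / (∑ k ∈ T, r k)) • Y j‖ + 4 * (1 - δ) * c :=
  stmt_3_general d n q r hq hq1 hr hr1 X Y c hX hY S T δ hδ0 hS hT
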